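/- Consider the unconstrained iteration x_{t+1} = x_t − η_t g_t in ℝ^d with deterministic step sizes η_t > 0, and let f : ℝ^d → ℝ be differentiable with L̄-Lipschitz gradient. Assume there are nonnegative reals b_t, v_t, m such that for every t ≥ 1, almost surely ‖E[g_t | x_t] − ∇f(x_t)‖ ≤ b_t and E[‖g_t‖²] ≤ v_t + m·E[‖∇f(x_t)‖²]. Then for all t ≥ 1: E[f(x_{t+1})] ≤ E[f(x_t)] − (η_t/2)(1 − L̄ η_t m)·E[‖∇f(x_t)‖²] + (η_t/2)(b_t² + L̄ η_t v_t). -/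

import Mathlib

open MeasureTheory ProbabilityTheory Real
open scoped RealInnerProductSpace ENNReal NNReal BigOperators

noncomputable section

abbrev Euc (d : ℕ) := EuclideanSpace ℝ (Fin d)

def holderIdx (β : ℝ) : ℕ := ⌈β⌉₊ - 1

def HolderClass (d : ℕ) (β L : ℝ) (f : Euc d → ℝ) : Prop :=
  ContDiff ℝ (holderIdx β : ℕ∞) f ∧
    ∀ x z : Euc d,
      ‖iteratedFDeriv ℝ (holderIdx β) f x - iteratedFDeriv ℝ (holderIdx β) f z‖ ≤
        L * ‖x - z‖ ^ (β - (holderIdx β : ℝ))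

def uniformSeg : Measure ℝ :=
  (volume (Set.Icc (-1:ℝ) 1))⁻¹ • volume.restrict (Set.Icc (-1:ℝ) 1)

def sphereL2 (d : ℕ) : Set (Euc d) := Metric.sphere (0 : Euc d) 1

def uniformSphereL2 (d : ℕ) : Measure (Euc d) :=
  (Measure.hausdorffMeasure ((d:ℝ) - 1) (sphereL2 d))⁻¹ •
    (Measure.hausdorffMeasure ((d:ℝ) - 1)).restrict (sphereL2 d)

def uniformBallL2 (d : ℕ) : Measure (Euc d) :=
  (volume (Metric.closedBall (0 : Euc d) 1))⁻¹ •
    volume.restrict (Metric.closedBall (0 : Euc d) 1)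

def l1Ball (d : ℕ) : Set (Euc d) := {u | ∑ i, |u i| < 1}

def l1Sphere (d : ℕ) : Set (Euc d) := {u | ∑ i, |u i| = 1}

def uniformBallL1 (d : ℕ) : Measure (Euc d) :=
  (volume (l1Ball d))⁻¹ • volume.restrict (l1Ball d)

def uniformSphereL1 (d : ℕ) : Measure (Euc d) :=
  (Measure.hausdorffMeasure ((d:ℝ) - 1) (l1Sphere d))⁻¹ •
    (Measure.hausdorffMeasure ((d:ℝ) - 1)).restrict (l1Sphere d)

def signVec (d : ℕ) (x : Euc d) : Euc d :=
  (EuclideanSpace.equiv (Fin d) ℝ).symm (fun i => if x i < 0 then (-1:ℝ) else 1)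

def KernelValid (β : ℝ) (K : ℝ → ℝ) : Prop :=
  Measurable K ∧ (∃ C, ∀ u ∈ Set.Icc (-1:ℝ) 1, |K u| ≤ C) ∧
    (∫ u in Set.Icc (-1:ℝ) 1, K u) = 0 ∧
    (∫ u in Set.Icc (-1:ℝ) 1, u * K u) = 1 ∧
    (∀ j : ℕ, 2 ≤ j → j ≤ holderIdx β → (∫ u in Set.Icc (-1:ℝ) 1, u ^ j * K u) = 0) ∧
    IntegrableOn (fun u => |u| ^ β * |K u|) (Set.Icc (-1:ℝ) 1)

lemma sgd_abs_coord_le {d : ℕ} (x : Euc d) (i : Fin d) : |x i| ≤ ‖x‖ := by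
  have h := abs_real_inner_le_norm (EuclideanSpace.single i (1:ℝ)) x
  simpa [EuclideanSpace.inner_single_left, EuclideanSpace.norm_single] using h

lemma sgd_descent_pw {F : Type*} [NormedAddCommGroup F] [InnerProductSpace ℝ F]
    [CompleteSpace F] (f : F → ℝ) (hf : Differentiable ℝ f) (L : ℝ)
    (hlip : ∀ u v : F, ‖gradient f u - gradient f v‖ ≤ L * ‖u - v‖) (x y : F) :
    f y ≤ f x + ⟪gradient f x, y - x⟫ + L / 2 * ‖y - x‖ ^ 2 := by
  set v := y - x with hv
  set φ : ℝ → ℝ := fun s => f (x + s • v) - s * ⟪gradient f x, v⟫ - L * s ^ 2 / 2 * ‖v‖ ^ 2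
    with hφ
  have hline : ∀ s : ℝ, HasDerivAt (fun s : ℝ => x + s • v) v s := by
    intro s
    simpa using ((hasDerivAt_id s).smul_const v).const_add x
  have hder : ∀ s : ℝ, HasDerivAt φ
      (⟪gradient f (x + s • v), v⟫ - ⟪gradient f x, v⟫ - L * s * ‖v‖ ^ 2) s := by
    intro s
    have h1 : HasFDerivAt f ((InnerProductSpace.toDual ℝ F) (gradient f (x + s • v)))
        (x + s • v) := (hf _).hasGradientAt.hasFDerivAt
    have h2 : HasDerivAt (fun s : ℝ => f (x + s • v)) ⟪gradient f (x + s • v), v⟫ s := by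
      have h := (hf (x + s • v)).hasFDerivAt.comp_hasDerivAt s (hline s)
      rw [show (fderiv ℝ f (x + s • v)) v = ⟪gradient f (x + s • v), v⟫ from by
        rw [gradient, InnerProductSpace.toDual_symm_apply]] at h
      exact h
    have h3 : HasDerivAt (fun s : ℝ => s * ⟪gradient f x, v⟫) ⟪gradient f x, v⟫ s := by
      simpa using (hasDerivAt_id s).mul_const _
    have h4 : HasDerivAt (fun s : ℝ => L * s ^ 2 / 2 * ‖v‖ ^ 2) (L * s * ‖v‖ ^ 2) s := by
      have : HasDerivAt (fun s : ℝ => s ^ 2) (2 * s) s := by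
        simpa using hasDerivAt_pow 2 s
      have := ((this.const_mul L).div_const 2).mul_const (‖v‖ ^ 2)
      rw [show L * s * ‖v‖ ^ 2 = L * (2 * s) / 2 * ‖v‖ ^ 2 by ring]; exact this
    exact (h2.sub h3).sub h4
  have hanti : AntitoneOn φ (Set.Icc 0 1) := by
    apply antitoneOn_of_deriv_nonpos (convex_Icc 0 1)
    · exact (fun s _ => (hder s).differentiableAt.continuousAt.continuousWithinAt)
    · exact fun s _ => (hder s).differentiableAt.differentiableWithinAt
    · intro s hs
      rw [interior_Icc] at hs
      rw [(hder s).deriv]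
      have hb : ⟪gradient f (x + s • v) - gradient f x, v⟫ ≤ L * s * ‖v‖ ^ 2 := by
        calc ⟪gradient f (x + s • v) - gradient f x, v⟫
            ≤ ‖gradient f (x + s • v) - gradient f x‖ * ‖v‖ := real_inner_le_norm _ _
          _ ≤ (L * ‖(x + s • v) - x‖) * ‖v‖ := by
              gcongr; exact hlip _ _
          _ = L * s * ‖v‖ ^ 2 := by
              rw [add_sub_cancel_left, norm_smul, Real.norm_eq_abs,
                abs_of_pos hs.1]; ring
      rw [inner_sub_left] at hb
      linarith
  have := hanti (Set.left_mem_Icc.2 zero_le_one) (Set.right_mem_Icc.2 zero_le_one) zero_le_one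
  simp only [hφ, zero_smul, add_zero, zero_mul, zero_pow, mul_zero, zero_div, sub_zero,
    one_smul, one_mul, one_pow, mul_one] at this
  have hxy : x + v = y := by rw [hv]; abel
  rw [hxy] at this
  linarith

lemma sgd_condexp_clm {Ω : Type*} {m m0 : MeasurableSpace Ω} {μ : @Measure Ω m0}
    [IsFiniteMeasure μ] (hm : m ≤ m0)
    {E F : Type*} [NormedAddCommGroup E] [NormedSpace ℝ E] [CompleteSpace E]
    [NormedAddCommGroup F] [NormedSpace ℝ F] [CompleteSpace F]
    (T : E →L[ℝ] F) {g : Ω → E} (hg : Integrable g μ) :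
    (fun ω => T ((μ[g|m]) ω)) =ᵐ[μ] μ[fun ω => T (g ω)|m] := by
  have : SigmaFinite (μ.trim hm) := by
    have : IsFiniteMeasure (μ.trim hm) := isFiniteMeasure_trim hm
    infer_instance
  refine ae_eq_condExp_of_forall_setIntegral_eq hm (T.integrable_comp hg) ?_ ?_ ?_
  · intro s _ _
    exact (T.integrable_comp integrable_condExp).integrableOn
  · intro s hs _
    rw [T.integral_comp_comm integrable_condExp.integrableOn,
      setIntegral_condExp hm hg hs, T.integral_comp_comm hg.integrableOn]
  · exact ⟨fun ω => T ((μ[g|m]) ω),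
      T.continuous.comp_stronglyMeasurable stronglyMeasurable_condExp,
      Filter.EventuallyEq.rfl⟩

lemma sgd_inner_condexp_key {d : ℕ} {Ω : Type*} {m m0 : MeasurableSpace Ω}
    {μ : @Measure Ω m0} [IsProbabilityMeasure μ] (hm : m ≤ m0) {h g : Ω → Euc d}
    (hhm : StronglyMeasurable[m] h)
    (hh2 : Integrable (fun ω => ‖h ω‖ ^ 2) μ) (hg2 : Integrable (fun ω => ‖g ω‖ ^ 2) μ)
    (hgi : Integrable g μ) :
    Integrable (fun ω => ⟪h ω, (μ[g|m]) ω⟫) μ ∧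
      ∫ ω, ⟪h ω, g ω⟫ ∂μ = ∫ ω, ⟪h ω, (μ[g|m]) ω⟫ ∂μ := by
  have : SigmaFinite (μ.trim hm) := by
    have : IsFiniteMeasure (μ.trim hm) := isFiniteMeasure_trim hm
    infer_instance
  have hham : AEStronglyMeasurable h μ := (hhm.mono hm).aestronglyMeasurable
  set hi : Fin d → Ω → ℝ := fun i ω => h ω i with hhi
  set gi : Fin d → Ω → ℝ := fun i ω => g ω i with hgidef
  have hhim : ∀ i, StronglyMeasurable[m] (hi i) := fun i =>
    (EuclideanSpace.proj (𝕜 := ℝ) i).continuous.comp_stronglyMeasurable hhm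
  have hgii : ∀ i, Integrable (gi i) μ := fun i =>
    (EuclideanSpace.proj (𝕜 := ℝ) i).integrable_comp hgi
  have hprod : ∀ i, Integrable (hi i * gi i) μ := by
    intro i
    refine Integrable.mono' ((hh2.add hg2).div_const 2)
      (((EuclideanSpace.proj (𝕜 := ℝ) i).continuous.comp_aestronglyMeasurable hham).mul
        ((EuclideanSpace.proj (𝕜 := ℝ) i).continuous.comp_aestronglyMeasurable hgi.1))
      (Filter.Eventually.of_forall fun ω => ?_)
    have h1 : |h ω i| ≤ ‖h ω‖ := sgd_abs_coord_le _ i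
    have h2 : |g ω i| ≤ ‖g ω‖ := sgd_abs_coord_le _ i
    simp only [Pi.mul_apply, Pi.add_apply]
    have h3 : ‖hi i ω * gi i ω‖ = |h ω i| * |g ω i| := by
      simp [hhi, hgidef, abs_mul]
    rw [h3]
    have h4 : (0:ℝ) ≤ ‖h ω‖ := norm_nonneg _
    have h5 : (0:ℝ) ≤ ‖g ω‖ := norm_nonneg _
    nlinarith [abs_nonneg (h ω i), abs_nonneg (g ω i), sq_nonneg (|h ω i| - |g ω i|)]
  have hpull : ∀ i, (fun ω => hi i ω * ((μ[g|m]) ω) i) =ᵐ[μ] μ[hi i * gi i|m] := by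
    intro i
    have h1 : μ[hi i * gi i|m] =ᵐ[μ] hi i * μ[gi i|m] :=
      condExp_mul_of_stronglyMeasurable_left (hhim i) (hprod i) (hgii i)
    have h2 : (fun ω => ((μ[g|m]) ω) i) =ᵐ[μ] μ[gi i|m] :=
      sgd_condexp_clm hm (EuclideanSpace.proj (𝕜 := ℝ) i) hgi
    filter_upwards [h1, h2] with ω e1 e2
    simp only [Pi.mul_apply] at e1 ⊢
    rw [e2, e1]
  have hie : ∀ i, Integrable (fun ω => hi i ω * ((μ[g|m]) ω) i) μ := fun i =>
    integrable_condExp.congr (hpull i).symm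
  have hinner1 : (fun ω => ⟪h ω, (μ[g|m]) ω⟫) =
      fun ω => ∑ i, hi i ω * ((μ[g|m]) ω) i := by
    funext ω
    simp [PiLp.inner_apply, RCLike.inner_apply, hhi, conj_trivial, mul_comm]
  have hinner2 : (fun ω => ⟪h ω, g ω⟫) = fun ω => ∑ i, hi i ω * gi i ω := by
    funext ω
    simp [PiLp.inner_apply, RCLike.inner_apply, hhi, hgidef, conj_trivial, mul_comm]
  constructor
  · rw [hinner1]
    exact integrable_finset_sum _ fun i _ => hie i
  · have e1 : ∫ ω, ∑ i, hi i ω * gi i ω ∂μ = ∑ i, ∫ ω, hi i ω * gi i ω ∂μ := by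
      exact integral_finset_sum _ fun i _ => hprod i
    have e2 : ∫ ω, ∑ i, hi i ω * ((μ[g|m]) ω) i ∂μ
        = ∑ i, ∫ ω, hi i ω * ((μ[g|m]) ω) i ∂μ := by
      exact integral_finset_sum _ fun i _ => hie i
    rw [hinner1, hinner2, e1, e2]
    refine Finset.sum_congr rfl fun i _ => ?_
    rw [integral_congr_ae (hpull i), integral_condExp hm]
    rfl

/-- descent lemma for biased stochastic gradients.
For the unconstrained iteration `x_{t+1} = x_t − η_t g_t`:
`E[f(x_{t+1})] ≤ E[f(x_t)] − (η_t/2)(1 − L̄η_t m)E[‖∇f(x_t)‖²] + (η_t/2)(b_t² + L̄η_t v_t)`. -/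
theorem descent_lemma_biased {d : ℕ}
    {Ω : Type} [MeasurableSpace Ω] (μ : Measure Ω) [IsProbabilityMeasure μ]
    (Lbar : ℝ) (hLbar : 0 < Lbar) (f : Euc d → ℝ) (hf : Differentiable ℝ f)
    (hlip : ∀ u v : Euc d, ‖gradient f u - gradient f v‖ ≤ Lbar * ‖u - v‖)
    (η : ℕ → ℝ) (hη : ∀ t, 1 ≤ t → 0 < η t)
    (x g : ℕ → Ω → Euc d)
    (hxm : ∀ t, Measurable (x t)) (hgm : ∀ t, Measurable (g t))
    (hiter : ∀ t, 1 ≤ t → ∀ ω, x (t + 1) ω = x t ω - η t • g t ω)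
    (b v : ℕ → ℝ) (m : ℝ) (hb : ∀ t, 0 ≤ b t) (hv : ∀ t, 0 ≤ v t) (hm : 0 ≤ m)
    (hbias : ∀ t, 1 ≤ t → ∀ᵐ ω ∂μ,
      ‖(μ[g t | MeasurableSpace.comap (x t) inferInstance]) ω - gradient f (x t ω)‖ ≤ b t)
    (hvar : ∀ t, 1 ≤ t →
      (∫ ω, ‖g t ω‖ ^ 2 ∂μ) ≤ v t + m * ∫ ω, ‖gradient f (x t ω)‖ ^ 2 ∂μ)
    (hint1 : ∀ t, Integrable (fun ω => ‖g t ω‖ ^ 2) μ)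
    (hint2 : ∀ t, Integrable (fun ω => ‖gradient f (x t ω)‖ ^ 2) μ)
    (hint3 : ∀ t, Integrable (g t) μ)
    (hint4 : ∀ t, Integrable (fun ω => f (x t ω)) μ) :
    ∀ t, 1 ≤ t →
      (∫ ω, f (x (t + 1) ω) ∂μ) ≤
        (∫ ω, f (x t ω) ∂μ) -
            η t / 2 * (1 - Lbar * η t * m) * (∫ ω, ‖gradient f (x t ω)‖ ^ 2 ∂μ) +
          η t / 2 * ((b t) ^ 2 + Lbar * η t * v t) := by
  intro t ht
  have hm0 := (hxm t).comap_le
  set mΩ : MeasurableSpace Ω := MeasurableSpace.comap (x t) inferInstance with hmΩ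
  -- gradient is continuous
  have hgc : Continuous (gradient f) := by
    refine LipschitzWith.continuous (K := Lbar.toNNReal) (LipschitzWith.of_dist_le_mul ?_)
    intro u v'
    rw [dist_eq_norm, dist_eq_norm]
    calc ‖gradient f u - gradient f v'‖ ≤ Lbar * ‖u - v'‖ := hlip u v'
      _ = Lbar.toNNReal * ‖u - v'‖ := by rw [Real.coe_toNNReal _ hLbar.le]
  set h : Ω → Euc d := fun ω => gradient f (x t ω) with hh
  have hxmm : Measurable[mΩ] (x t) := fun s hs => ⟨s, hs, rfl⟩
  have hhsm : StronglyMeasurable[mΩ] h :=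
    hgc.comp_stronglyMeasurable hxmm.stronglyMeasurable
  obtain ⟨hintc, heq⟩ :=
    sgd_inner_condexp_key (μ := μ) hm0 hhsm (hint2 t) (hint1 t) (hint3 t)
  -- integrability of the inner product with g
  have hmeas :=
    ((hhsm.mono hm0).aestronglyMeasurable (μ := μ)).inner (𝕜 := ℝ) (hgm t).aestronglyMeasurable
  have hinn_int : Integrable (fun ω => ⟪h ω, g t ω⟫) μ := by
    refine Integrable.mono' (((hint2 t).add (hint1 t)).div_const 2) hmeas
      (Filter.Eventually.of_forall fun ω => ?_)
    simp only [Pi.add_apply]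
    have h1 := abs_real_inner_le_norm (h ω) (g t ω)
    have h2 : (0:ℝ) ≤ ‖h ω‖ := norm_nonneg _
    have h3 : (0:ℝ) ≤ ‖g t ω‖ := norm_nonneg _
    rw [Real.norm_eq_abs]
    nlinarith [sq_nonneg (‖h ω‖ - ‖g t ω‖)]
  -- pointwise descent inequality
  have hpw : ∀ ω, f (x (t + 1) ω) ≤
      f (x t ω) - η t * ⟪h ω, g t ω⟫ + Lbar / 2 * (η t) ^ 2 * ‖g t ω‖ ^ 2 := by
    intro ω
    have := sgd_descent_pw f hf Lbar hlip (x t ω) (x (t + 1) ω)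
    rw [hiter t ht ω] at this ⊢
    have e1 : x t ω - η t • g t ω - x t ω = -(η t • g t ω) := by abel
    rw [e1] at this
    rw [inner_neg_right, inner_smul_right, norm_neg, norm_smul, Real.norm_eq_abs,
      abs_of_pos (hη t ht), mul_pow] at this
    calc f (x t ω - η t • g t ω) ≤ f (x t ω) + -(η t * ⟪h ω, g t ω⟫)
          + Lbar / 2 * ((η t) ^ 2 * ‖g t ω‖ ^ 2) := this
      _ = f (x t ω) - η t * ⟪h ω, g t ω⟫ + Lbar / 2 * (η t) ^ 2 * ‖g t ω‖ ^ 2 := by ring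
  -- integrate the descent inequality
  have i3 : Integrable (fun ω => η t * ⟪h ω, g t ω⟫) μ := hinn_int.const_mul _
  have i1 : Integrable (fun ω => f (x t ω) - η t * ⟪h ω, g t ω⟫) μ := (hint4 t).sub i3
  have i2 : Integrable (fun ω => Lbar / 2 * (η t) ^ 2 * ‖g t ω‖ ^ 2) μ :=
    (hint1 t).const_mul _
  have hRHSint : Integrable (fun ω => f (x t ω) - η t * ⟪h ω, g t ω⟫
      + Lbar / 2 * (η t) ^ 2 * ‖g t ω‖ ^ 2) μ := i1.add i2
  have hstep1 : (∫ ω, f (x (t + 1) ω) ∂μ) ≤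
      (∫ ω, f (x t ω) ∂μ) - η t * (∫ ω, ⟪h ω, g t ω⟫ ∂μ)
        + Lbar / 2 * (η t) ^ 2 * (∫ ω, ‖g t ω‖ ^ 2 ∂μ) := by
    have hmono := integral_mono (hint4 (t + 1)) hRHSint hpw
    have e : ∫ ω, (f (x t ω) - η t * ⟪h ω, g t ω⟫
        + Lbar / 2 * (η t) ^ 2 * ‖g t ω‖ ^ 2) ∂μ
        = (∫ ω, f (x t ω) ∂μ) - η t * (∫ ω, ⟪h ω, g t ω⟫ ∂μ)
          + Lbar / 2 * (η t) ^ 2 * (∫ ω, ‖g t ω‖ ^ 2 ∂μ) := by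
      rw [integral_add i1 i2, integral_sub (hint4 t) i3, integral_const_mul _ _,
        integral_const_mul _ _]
    rw [e] at hmono
    exact hmono
  -- lower bound on the inner product term via the bias assumption
  have hlow : (∫ ω, ‖h ω‖ ^ 2 ∂μ) / 2 - (b t) ^ 2 / 2 ≤ ∫ ω, ⟪h ω, g t ω⟫ ∂μ := by
    rw [heq]
    have hmono : ∀ᵐ ω ∂μ, ‖h ω‖ ^ 2 / 2 - (b t) ^ 2 / 2 ≤
        ⟪h ω, (μ[g t|mΩ]) ω⟫ := by
      filter_upwards [hbias t ht] with ω hω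
      have e : ⟪h ω, (μ[g t|mΩ]) ω⟫
          = ⟪h ω, h ω⟫ + ⟪h ω, (μ[g t|mΩ]) ω - h ω⟫ := by
        rw [inner_sub_right]; ring
      have e2 : ⟪h ω, h ω⟫ = ‖h ω‖ ^ 2 := real_inner_self_eq_norm_sq _
      have e3 : -(‖h ω‖ * b t) ≤ ⟪h ω, (μ[g t|mΩ]) ω - h ω⟫ := by
        have := abs_real_inner_le_norm (h ω) ((μ[g t|mΩ]) ω - h ω)
        have hb2 : ‖h ω‖ * ‖(μ[g t|mΩ]) ω - h ω‖ ≤ ‖h ω‖ * b t :=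
          mul_le_mul_of_nonneg_left hω (norm_nonneg _)
        nlinarith [neg_abs_le (⟪h ω, (μ[g t|mΩ]) ω - h ω⟫)]
      nlinarith [sq_nonneg (‖h ω‖ - b t)]
    have hL : Integrable (fun ω => ‖h ω‖ ^ 2 / 2 - (b t) ^ 2 / 2) μ :=
      ((hint2 t).div_const 2).sub (integrable_const _)
    have := integral_mono_ae hL hintc hmono
    rwa [integral_sub ((hint2 t).div_const 2) (integrable_const _),
      integral_div, integral_const, probReal_univ, one_smul] at this
  -- combine
  set B := ∫ ω, ‖gradient f (x t ω)‖ ^ 2 ∂μ with hB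
  have hG := hvar t ht
  have hηpos := hη t ht
  have hc1 : - (η t * (∫ ω, ⟪h ω, g t ω⟫ ∂μ)) ≤ - (η t * (B / 2 - (b t) ^ 2 / 2)) := by
    have := mul_le_mul_of_nonneg_left hlow hηpos.le
    linarith
  have hc2 : Lbar / 2 * (η t) ^ 2 * (∫ ω, ‖g t ω‖ ^ 2 ∂μ)
      ≤ Lbar / 2 * (η t) ^ 2 * (v t + m * B) := by
    have hcoef : (0:ℝ) ≤ Lbar / 2 * (η t) ^ 2 := by positivity
    exact mul_le_mul_of_nonneg_left hG hcoef
  have : (∫ ω, f (x (t + 1) ω) ∂μ) ≤ (∫ ω, f (x t ω) ∂μ)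
      - η t * (B / 2 - (b t) ^ 2 / 2) + Lbar / 2 * (η t) ^ 2 * (v t + m * B) := by
    linarith
  calc (∫ ω, f (x (t + 1) ω) ∂μ) ≤ (∫ ω, f (x t ω) ∂μ)
        - η t * (B / 2 - (b t) ^ 2 / 2) + Lbar / 2 * (η t) ^ 2 * (v t + m * B) := this
    _ = (∫ ω, f (x t ω) ∂μ) - η t / 2 * (1 - Lbar * η t * m) * B
        + η t / 2 * ((b t) ^ 2 + Lbar * η t * v t) := by ring
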